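/- For every twice continuously differentiable function f : ℝ → ℂ and every x ∈ ℝ, f(x) = J[D₁(D₂ f)](x) + c₀⁻¹ f(0) Y₀(x) + c₁⁻¹ f'(0) Y₁(x). -/

import Mathlib

/-!
`cosh ^ k` is an integrating factor for `f ↦ f' + k tanh f`, so `D_k f = sech^k (cosh^k f)'` and
`I_k` inverts `D_k` up to the boundary term: `I_k[D_k f] = f - f(0) sech^k`. Applying this with
`k = 1` to `D₂ f` and then with `k = 2` to `f` gives
`J[D₁ D₂ f] = f - f(0) sech² - f'(0) I₂[sech]`, and `I₂[sech] = sech tanh`; the constants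
`c₀, c₁` in `Y₀, Y₁` cancel.
-/

noncomputable section

/-- `sech x = 1 / cosh x`. -/
def sech (x : ℝ) : ℝ := 1 / Real.cosh x

/-- `Y₀(x) = √(3/4) sech² x`. -/
def Y0 (x : ℝ) : ℝ := Real.sqrt (3 / 4) * sech x ^ 2

/-- `Y₁(x) = √(3/2) sech x tanh x`. -/
def Y1 (x : ℝ) : ℝ := Real.sqrt (3 / 2) * sech x * Real.tanh x

/-- `D₁ f = f' + tanh · f`. -/
def D1 (f : ℝ → ℂ) (x : ℝ) : ℂ := deriv f x + (Real.tanh x : ℂ) * f x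

/-- `D₂ f = f' + 2 tanh · f`. -/
def D2 (f : ℝ → ℂ) (x : ℝ) : ℂ := deriv f x + 2 * (Real.tanh x : ℂ) * f x

/-- `I₁[g](x) = sech x ∫₀ˣ cosh y · g(y) dy`. -/
def I1op (g : ℝ → ℂ) (x : ℝ) : ℂ := (sech x : ℂ) * ∫ y in (0 : ℝ)..x, (Real.cosh y : ℂ) * g y

/-- `I₂[g](x) = sech² x ∫₀ˣ cosh² y · g(y) dy`. -/
def I2op (g : ℝ → ℂ) (x : ℝ) : ℂ :=
  (sech x : ℂ) ^ 2 * ∫ y in (0 : ℝ)..x, (Real.cosh y : ℂ) ^ 2 * g y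

/-- `J[g] = I₂[I₁[g]]`. -/
def Jop (g : ℝ → ℂ) : ℝ → ℂ := I2op (I1op g)

open Real

lemma ofReal_sech_mul_cosh (x : ℝ) : (sech x : ℂ) * cosh x = 1 := by
  rw [sech, ← Complex.ofReal_mul, one_div_mul_cancel (cosh_pos x).ne', Complex.ofReal_one]

lemma ofReal_tanh_mul_cosh (x : ℝ) : (tanh x : ℂ) * cosh x = sinh x := by
  rw [tanh_eq_sinh_div_cosh, ← Complex.ofReal_mul, div_mul_cancel₀ _ (cosh_pos x).ne']

lemma continuous_sech : Continuous sech :=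
  continuous_const.div continuous_cosh fun x => (cosh_pos x).ne'

lemma contDiff_tanh {n : WithTop ℕ∞} : ContDiff ℝ n tanh := by
  simp only [funext tanh_eq_sinh_div_cosh]
  exact contDiff_sinh.div contDiff_cosh fun x => (cosh_pos x).ne'

lemma hasDerivAt_cosh_pow_mul {f : ℝ → ℂ} {f' : ℂ} {y : ℝ} (k : ℕ) (hf : HasDerivAt f f' y) :
    HasDerivAt (fun z => (cosh z : ℂ) ^ k * f z)
      ((cosh y : ℂ) ^ k * (f' + k * tanh y * f y)) y := by
  refine ((((hasDerivAt_cosh y).ofReal_comp).pow k).mul hf).congr_deriv ?_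
  rcases k with _ | k
  · simp
  · rw [Pi.pow_apply, ← ofReal_tanh_mul_cosh]
    push_cast
    ring

lemma integral_cosh_pow_mul_deriv_add {f : ℝ → ℂ} (hf : ContDiff ℝ 1 f) (k : ℕ) (x : ℝ) :
    ∫ y in (0 : ℝ)..x, (cosh y : ℂ) ^ k * (deriv f y + k * tanh y * f y)
      = (cosh x : ℂ) ^ k * f x - f 0 := by
  have hcont : Continuous fun y => (cosh y : ℂ) ^ k * (deriv f y + k * tanh y * f y) := by
    have := hf.continuous_deriv le_rfl
    have := hf.continuous
    have := (contDiff_tanh (n := 0)).continuous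
    fun_prop
  rw [intervalIntegral.integral_eq_sub_of_hasDerivAt
    (fun y _ => hasDerivAt_cosh_pow_mul k ((hf.differentiable one_ne_zero) y).hasDerivAt)
    (hcont.intervalIntegrable 0 x)]
  simp

lemma I1op_D1 {g : ℝ → ℂ} (hg : ContDiff ℝ 1 g) (x : ℝ) :
    I1op (D1 g) x = g x - g 0 * sech x := by
  have h := integral_cosh_pow_mul_deriv_add hg 1 x
  simp only [pow_one, Nat.cast_one, one_mul] at h
  simp only [I1op, D1, h]
  linear_combination g x * ofReal_sech_mul_cosh x

lemma I2op_D2 {f : ℝ → ℂ} (hf : ContDiff ℝ 1 f) (x : ℝ) :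
    I2op (D2 f) x = f x - f 0 * sech x ^ 2 := by
  have h := integral_cosh_pow_mul_deriv_add hf 2 x
  simp only [Nat.cast_ofNat] at h
  simp only [I2op, D2, h]
  linear_combination f x * ((sech x : ℂ) * cosh x + 1) * ofReal_sech_mul_cosh x

lemma I2op_sech (x : ℝ) : I2op (fun y => (sech y : ℂ)) x = sech x * tanh x := by
  have hcosh : ∀ y, (cosh y : ℂ) ^ 2 * sech y = (cosh y : ℝ) := fun y => by
    linear_combination (cosh y : ℂ) * ofReal_sech_mul_cosh y
  have hint : ∫ y in (0 : ℝ)..x, cosh y = sinh x := by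
    rw [intervalIntegral.integral_eq_sub_of_hasDerivAt (fun y _ => hasDerivAt_sinh y)
      (continuous_cosh.intervalIntegrable 0 x), sinh_zero, sub_zero]
  rw [I2op, funext hcosh, intervalIntegral.integral_ofReal, hint, ← ofReal_tanh_mul_cosh]
  linear_combination (sech x : ℂ) * tanh x * ofReal_sech_mul_cosh x

lemma I2op_sub_const_mul {g h : ℝ → ℂ} (hg : Continuous g) (hh : Continuous h) (c : ℂ) (x : ℝ) :
    I2op (fun y => g y - c * h y) x = I2op g x - c * I2op h x := by
  have hwg : Continuous fun y => (cosh y : ℂ) ^ 2 * g y := by fun_prop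
  have hwh : Continuous fun y => c * ((cosh y : ℂ) ^ 2 * h y) := by fun_prop
  simp only [I2op, mul_sub, mul_left_comm _ c]
  rw [intervalIntegral.integral_sub (hwg.intervalIntegrable 0 x) (hwh.intervalIntegrable 0 x),
    intervalIntegral.integral_const_mul]
  ring

lemma contDiff_D2 {f : ℝ → ℂ} {n : WithTop ℕ∞} (hf : ContDiff ℝ (n + 1) f) :
    ContDiff ℝ n (D2 f) := by
  have htanh : ContDiff ℝ n fun y => (tanh y : ℂ) := Complex.ofRealCLM.contDiff.comp contDiff_tanh
  exact hf.deriv'.add ((contDiff_const.mul htanh).mul (hf.of_le le_self_add))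

/-- The representation formula `f = J[D₁ D₂ f] + c₀⁻¹ f(0) Y₀ + c₁⁻¹ f'(0) Y₁`. -/
theorem representation_formula (f : ℝ → ℂ) (hf : ContDiff ℝ 2 f) (x : ℝ) :
    f x = Jop (D1 (D2 f)) x + (Real.sqrt (3 / 4) : ℂ)⁻¹ * f 0 * (Y0 x : ℂ)
        + (Real.sqrt (3 / 2) : ℂ)⁻¹ * deriv f 0 * (Y1 x : ℂ) := by
  have hD2 : ContDiff ℝ 1 (D2 f) := contDiff_D2 hf
  have hJ : Jop (D1 (D2 f)) x = f x - f 0 * sech x ^ 2 - deriv f 0 * (sech x * tanh x) := by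
    have hD2_zero : D2 f 0 = deriv f 0 := by simp [D2]
    rw [Jop, funext (I1op_D1 hD2), I2op_sub_const_mul (h := fun y => (sech y : ℂ)) hD2.continuous
      (Complex.continuous_ofReal.comp continuous_sech), I2op_D2 (hf.of_le one_le_two), I2op_sech,
      hD2_zero]
  have hc₀ : (√(3 / 4) : ℂ) ≠ 0 := by exact_mod_cast (sqrt_pos.mpr (by norm_num)).ne'
  have hc₁ : (√(3 / 2) : ℂ) ≠ 0 := by exact_mod_cast (sqrt_pos.mpr (by norm_num)).ne'
  rw [hJ, Y0, Y1]
  push_cast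
  field_simp
  ring
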